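/- arXiv:1306.2857 — 5 statements merged into one kernel-verified Lean document; each statement's English description precedes it below -/
import Mathlib

section
/- If m > n and Γ is a pure n-dimensional simplicial complex, then for all t ≥ m, the pure t-skeleton of Δ_m((Δ_n(Γ))^[m]) equals the pure t-skeleton of Δ_n(Γ). -/
namespace ConnonFaridi

open Finset
open scoped Classical

noncomputable section

variable {V : Type*} [Fintype V] [DecidableEq V]

/-- An abstract simplicial complex on vertex type `V`: a family of faces closed under subsets. -/
def IsComplex (K : Finset (Finset V)) : Prop :=
  ∀ F ∈ K, ∀ F' ⊆ F, F' ∈ K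

/-- The vertex set of a complex. -/
def verts (K : Finset (Finset V)) : Finset V := K.sup id

/-- `K` is pure of dimension `n`: every face is contained in a face of dimension `n`. -/
def IsPureDim (n : ℕ) (K : Finset (Finset V)) : Prop :=
  ∀ F ∈ K, ∃ G ∈ K, F ⊆ G ∧ G.card = n + 1

/-- The pure d-skeleton: the complex generated by (downward closure of) the d-faces of `K`. -/
def skeleton (d : ℕ) (K : Finset (Finset V)) : Finset (Finset V) :=
  (K.filter fun G => G.card = d + 1).biUnion Finset.powerset

/-- The d-closure of a (pure d-dimensional) complex `K`, relative to the vertex set `W`: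
faces are all subsets of `W` of size at most `d`, together with those subsets all of whose
(d+1)-element subsets are faces of `K`. -/
def closureOn (W : Finset V) (d : ℕ) (K : Finset (Finset V)) : Finset (Finset V) :=
  W.powerset.filter fun S => S.card ≤ d ∨ ∀ T ⊆ S, T.card = d + 1 → T ∈ K

/-- The d-closure `Δ_d(K)` on the vertex set of `K`. -/
def closure (d : ℕ) (K : Finset (Finset V)) : Finset (Finset V) :=
  closureOn (verts K) d K

/-- The induced subcomplex of `K` on the vertex set `W`. -/
def induced (K : Finset (Finset V)) (W : Finset V) : Finset (Finset V) :=
  K.filter fun F => F ⊆ W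

/-- The Z/2 simplicial boundary of a chain, encoded as the finset of faces with coefficient 1:
the boundary consists of those sets which are codimension-one subsets of an odd number of
members of the chain. (For a chain of vertices this is the reduced/augmented boundary.) -/
def bdry (c : Finset (Finset V)) : Finset (Finset V) :=
  (c.biUnion Finset.powerset).filter fun T =>
    Odd ((c.filter fun F => T ⊆ F ∧ T.card + 1 = F.card).card)

/-- Two d-faces of the family `c` are adjacent if they intersect in a (d-1)-face. -/
def adjOn (d : ℕ) (c : Finset (Finset V)) (A B : Finset V) : Prop :=
  A ∈ c ∧ B ∈ c ∧ (A ∩ B).card = d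

/-- A d-dimensional cycle, recorded by its set `Ω` of d-faces: a nonempty pure d-dimensional,
d-path-connected complex in which every (d-1)-face lies in an even number of d-faces. -/
def IsCycleFaces (d : ℕ) (Ω : Finset (Finset V)) : Prop :=
  Ω.Nonempty ∧ (∀ F ∈ Ω, F.card = d + 1) ∧
    (∀ F ∈ Ω, ∀ G ∈ Ω, Relation.ReflTransGen (adjOn d Ω) F G) ∧
    ∀ T : Finset V, T.card = d → Even ((Ω.filter fun F => T ⊆ F).card)

/-- A d-dimensional cycle is face-minimal if no proper subset of its d-faces is a
d-dimensional cycle. -/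
def FaceMinimal (d : ℕ) (Ω : Finset (Finset V)) : Prop :=
  ∀ Ω' ⊂ Ω, ¬ IsCycleFaces d Ω'

/-- The complex generated by `Ω` is j-complete: it contains all j-faces on its vertex set. -/
def CompleteOn (j : ℕ) (Ω : Finset (Finset V)) : Prop :=
  ∀ S ⊆ verts Ω, S.card = j + 1 → ∃ F ∈ Ω, S ⊆ F

/-- `C` is a chord set of the d-dimensional cycle `Ω` in the complex `Γ` (Connon–Faridi). -/
def IsChordSet (d : ℕ) (Γ Ω C : Finset (Finset V)) : Prop :=
  (∀ F ∈ C, F ∈ Γ ∧ F.card = d + 1 ∧ F ∉ Ω) ∧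
  ∃ L : List (Finset (Finset V)), 2 ≤ L.length ∧
    (∀ Ωi ∈ L, IsCycleFaces d Ωi ∧ (∀ F ∈ Ωi, F ∈ C ∪ Ω) ∧ (verts Ωi).card < (verts Ω).card) ∧
    (∀ F ∈ C ∪ Ω, ∃ Ωi ∈ L, F ∈ Ωi) ∧
    (∀ F ∈ C, Even (L.countP fun Ωi => decide (F ∈ Ωi))) ∧
    (∀ F ∈ Ω, Odd (L.countP fun Ωi => decide (F ∈ Ωi)))

/-- `Γ` is d-chorded: it is pure of dimension `d ≥ 1` and every face-minimal, non-d-complete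
d-dimensional cycle in `Γ` has a chord set in `Γ`. -/
def IsChorded (d : ℕ) (Γ : Finset (Finset V)) : Prop :=
  1 ≤ d ∧ IsPureDim d Γ ∧
    ∀ Ω ⊆ Γ, IsCycleFaces d Ω → FaceMinimal d Ω → ¬ CompleteOn d Ω →
      ∃ C, IsChordSet d Γ Ω C

/-- The reduced simplicial homology of `K` over Z/2 vanishes in dimension `i`:
every homological i-cycle is an i-boundary. -/
def HVanishes (K : Finset (Finset V)) (i : ℕ) : Prop :=
  ∀ c : Finset (Finset V), (∀ F ∈ c, F ∈ K ∧ F.card = i + 1) → bdry c = ∅ →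
    ∃ c' : Finset (Finset V), (∀ F ∈ c', F ∈ K ∧ F.card = i + 2) ∧ bdry c' = c

/-- The Stanley–Reisner complex of the square-free monomial ideal generated by the
sets (monomials) in `𝒢`: faces are the sets containing no generator. -/
def stanleyReisner (𝒢 : Finset (Finset V)) : Finset (Finset V) :=
  Finset.univ.powerset.filter fun S => ∀ G ∈ 𝒢, ¬ G ⊆ S

/-- The facet complex of the square-free monomial ideal generated by `𝒢`. -/
def facetCx (𝒢 : Finset (Finset V)) : Finset (Finset V) :=
  Finset.univ.powerset.filter fun S => ∃ G ∈ 𝒢, S ⊆ G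

/-- The d-complement of `K`: the complex whose facets are the (d+1)-element sets
that are not faces of `K`. -/
def dComplement (d : ℕ) (K : Finset (Finset V)) : Finset (Finset V) :=
  Finset.univ.powerset.filter fun S => ∃ T, S ⊆ T ∧ T.card = d + 1 ∧ T ∉ K

/-- The ideal generated by the square-free degree-(d+1) monomials `𝒢` has a (d+1)-linear
resolution over a field of characteristic 2.  (Formalized via Fröberg's criterion, which over a
field of characteristic 2 amounts to the vanishing of the reduced Z/2 homology of all induced
subcomplexes of the Stanley–Reisner complex in every dimension `i ≠ (d+1) - 2`.) -/
def HasLinRes (d : ℕ) (𝒢 : Finset (Finset V)) : Prop :=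
  ∀ (W : Finset V) (i : ℕ), i ≠ d - 1 → HVanishes (induced (stanleyReisner 𝒢) W) i

/-- A graph is chordal if every cycle of length at least 4 has a chord. -/
def IsChordalGraph (G : SimpleGraph V) : Prop :=
  ∀ (v : V) (p : G.Walk v v), p.IsCycle → 4 ≤ p.length →
    ∃ u w, u ∈ p.support ∧ w ∈ p.support ∧ G.Adj u w ∧ s(u, w) ∉ p.edges

/-- The clique complex of a graph. -/
def cliqueCx (G : SimpleGraph V) : Finset (Finset V) :=
  Finset.univ.powerset.filter fun S => G.IsClique (S : Set V)

/-- A graph viewed as a pure 1-dimensional simplicial complex (faces: subsets of edges). -/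
def graphCx (G : SimpleGraph V) : Finset (Finset V) :=
  Finset.univ.powerset.filter fun S => ∃ u v, G.Adj u v ∧ S ⊆ ({u, v} : Finset V)

/-- The generating set of the edge ideal of a graph: its edges as 2-element sets. -/
def edgeGens (G : SimpleGraph V) : Finset (Finset V) :=
  Finset.univ.powerset.filter fun S => ∃ u v, G.Adj u v ∧ S = {u, v}

lemma mem_skeleton {d : ℕ} {K : Finset (Finset V)} {S : Finset V} :
    S ∈ skeleton d K ↔ ∃ G, G ∈ K ∧ G.card = d + 1 ∧ S ⊆ G := by
  simp [skeleton, Finset.mem_biUnion, Finset.mem_filter, Finset.mem_powerset, and_assoc]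

lemma mem_closureOn {W : Finset V} {d : ℕ} {K : Finset (Finset V)} {S : Finset V} :
    S ∈ closureOn W d K ↔ S ⊆ W ∧ (S.card ≤ d ∨ ∀ T ⊆ S, T.card = d + 1 → T ∈ K) := by
  simp [closureOn, Finset.mem_filter, Finset.mem_powerset]

lemma mem_verts {K : Finset (Finset V)} {v : V} :
    v ∈ verts K ↔ ∃ F ∈ K, v ∈ F := by
  simp [verts, Finset.mem_sup]

/-- If m > n and Γ is pure n-dimensional, then for all t ≥ m the pure t-skeleton
of Δ_m((Δ_n(Γ))^[m]) equals the pure t-skeleton of Δ_n(Γ). -/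
theorem stmt2 (n m t : ℕ) (Γ : Finset (Finset V)) (hΓ : IsComplex Γ) (hpure : IsPureDim n Γ)
    (hnm : n < m) (hmt : m ≤ t) :
    skeleton t (closure m (skeleton m (closure n Γ))) = skeleton t (closure n Γ) := by
  set W := verts Γ with hW
  set Δ := closure n Γ with hΔ
  set Sk := skeleton m Δ with hSk
  -- membership in Sk for (m+1)-sets
  have hSkmem : ∀ T : Finset V, T.card = m + 1 → (T ∈ Sk ↔ T ∈ Δ) := by
    intro T hT
    constructor
    · intro h
      rw [hSk, mem_skeleton] at h
      obtain ⟨G, hGΔ, hGc, hTG⟩ := h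
      have : T = G := Finset.eq_of_subset_of_card_le hTG (by omega)
      rwa [this]
    · intro h
      rw [hSk, mem_skeleton]
      exact ⟨T, h, hT, Finset.Subset.refl T⟩
  -- an (m+1)-set with all (n+1)-subsets in Γ, contained in W, is in Δ
  have hΔmem : ∀ T : Finset V, T ⊆ W → T.card = m + 1 →
      (∀ U ⊆ T, U.card = n + 1 → U ∈ Γ) → T ∈ Δ := by
    intro T hTW hTc h
    rw [hΔ, closure, mem_closureOn]
    exact ⟨hTW, Or.inr h⟩
  have hSksubW : verts Sk ⊆ W := by
    intro v hv
    rw [mem_verts] at hv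
    obtain ⟨F, hF, hvF⟩ := hv
    rw [hSk, mem_skeleton] at hF
    obtain ⟨G, hGΔ, _, hFG⟩ := hF
    rw [hΔ, closure, mem_closureOn] at hGΔ
    exact hGΔ.1 (hFG hvF)
  ext S
  rw [mem_skeleton, mem_skeleton]
  apply exists_congr
  intro G
  constructor
  · rintro ⟨hG, hGc, hSG⟩
    rw [closure, mem_closureOn] at hG
    obtain ⟨hGv, hGalt⟩ := hG
    have hall : ∀ T ⊆ G, T.card = m + 1 → T ∈ Sk := by
      rcases hGalt with h | h
      · omega
      · exact h
    refine ⟨?_, hGc, hSG⟩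
    rw [hΔ, closure, mem_closureOn]
    refine ⟨fun v hv => hSksubW (hGv hv), Or.inr ?_⟩
    intro U hUG hUc
    obtain ⟨T, hUT, hTG, hTc⟩ := Finset.exists_subsuperset_card_eq (n := m+1) hUG (by omega) (by omega)
    have hTSk := hall T hTG hTc
    rw [hSkmem T hTc, hΔ, closure, mem_closureOn] at hTSk
    rcases hTSk.2 with h | h
    · omega
    · exact h U hUT hUc
  · rintro ⟨hG, hGc, hSG⟩
    have hGΔ := hG
    rw [hΔ, closure, mem_closureOn] at hG
    obtain ⟨hGW, hGalt⟩ := hG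
    have hGn : ∀ U ⊆ G, U.card = n + 1 → U ∈ Γ := by
      rcases hGalt with h | h
      · omega
      · exact h
    have key : ∀ T ⊆ G, T.card = m + 1 → T ∈ Sk := by
      intro T hTG hTc
      rw [hSkmem T hTc]
      exact hΔmem T (fun v hv => hGW (hTG hv)) hTc
        (fun U hUT hUc => hGn U (hUT.trans hTG) hUc)
    refine ⟨?_, hGc, hSG⟩
    rw [closure, mem_closureOn]
    refine ⟨?_, Or.inr key⟩
    intro v hv
    obtain ⟨T, hvT, hTG, hTc⟩ := Finset.exists_subsuperset_card_eq (n := m+1)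
      (Finset.singleton_subset_iff.mpr hv) (by simp) (by omega)
    rw [mem_verts]
    exact ⟨T, key T hTG hTc, hvT (Finset.mem_singleton_self v)⟩


end

end ConnonFaridi
end

section
/- A simplicial complex Γ satisfies Γ = Δ_d(Γ^[d]) if and only if every minimal non-face of Γ has exactly d+1 elements. -/
namespace ConnonFaridi

open Finset
open scoped Classical

noncomputable section

variable {V : Type*} [Fintype V] [DecidableEq V]

/-- A simplicial complex Γ satisfies Γ = Δ_d(Γ^[d]) if and only if every
minimal non-face of Γ (a subset of V(Γ) that is not a face but all of whose proper subsets
are faces) has exactly d+1 elements. -/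
theorem stmt3 (d : ℕ) (Γ : Finset (Finset V)) (hΓ : IsComplex Γ) :
    Γ = closureOn (verts Γ) d (skeleton d Γ) ↔
      ∀ S ⊆ verts Γ, S ∉ Γ → (∀ T ⊂ S, T ∈ Γ) → S.card = d + 1 := by
  constructor
  · intro h S hSv hSn hmin
    rw [h] at hSn
    simp only [closureOn, mem_filter, mem_powerset, not_and, not_or] at hSn
    have h2 := hSn hSv
    push_neg at h2
    obtain ⟨hcard, T, hTS, hTcard, hTsk⟩ := h2
    by_cases hTeq : T = S
    · exact hTeq ▸ hTcard
    · exfalso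
      have hTΓ : T ∈ Γ := hmin T (ssubset_of_subset_of_ne hTS hTeq)
      apply hTsk
      simp only [skeleton, mem_biUnion, mem_filter, mem_powerset]
      exact ⟨T, ⟨hTΓ, hTcard⟩, Subset.rfl⟩
  · intro h
    apply Finset.Subset.antisymm
    · intro F hF
      simp only [closureOn, mem_filter, mem_powerset]
      refine ⟨Finset.le_sup (f := id) hF, Or.inr ?_⟩
      intro T hTF hTc
      simp only [skeleton, mem_biUnion, mem_filter, mem_powerset]
      exact ⟨T, ⟨hΓ F hF T hTF, hTc⟩, Subset.rfl⟩
    · intro S hS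
      simp only [closureOn, mem_filter, mem_powerset] at hS
      obtain ⟨hSv, hS2⟩ := hS
      by_contra hSn
      obtain ⟨S', hS'mem, hS'min⟩ := Finset.exists_min_image
        (S.powerset.filter (· ∉ Γ)) Finset.card ⟨S, by simp [hSn, hSv]⟩
      simp only [mem_filter, mem_powerset] at hS'mem
      obtain ⟨hS'S, hS'n⟩ := hS'mem
      have hmin : ∀ T ⊂ S', T ∈ Γ := by
        intro T hT
        by_contra hTn
        have hle := hS'min T (by
          simp only [mem_filter, mem_powerset]
          exact ⟨hT.subset.trans hS'S, hTn⟩)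
        exact absurd (Finset.card_lt_card hT) (not_lt.mpr hle)
      have hcard := h S' (hS'S.trans hSv) hS'n hmin
      rcases hS2 with hle | hall
      · have := Finset.card_le_card hS'S
        omega
      · have hsk := hall S' hS'S hcard
        simp only [skeleton, mem_biUnion, mem_filter, mem_powerset] at hsk
        obtain ⟨G, ⟨hG, hGc⟩, hSG⟩ := hsk
        have hEq : S' = G := Finset.eq_of_subset_of_card_le hSG (by omega)
        exact hS'n (hEq ▸ hG)

end

end ConnonFaridi
end

section
/- Over the field Z/2Z, if c is a homological d-cycle in a simplicial complex, then each d-path-connected component of the support complex of c is a d-dimensional cycle. -/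
namespace ConnonFaridi

open Finset
open scoped Classical

noncomputable section

variable {V : Type*} [Fintype V] [DecidableEq V]

/-!
Two distinct d-faces of `c` through a common (d-1)-face `T` meet exactly in `T`, so they are
adjacent. Hence all d-faces of `c` containing `T` lie in one d-path-connected component, and a
component contains either none of them or all of them. Their total number is even because `T`
does not occur in `∂c = 0`.
-/

section Components

variable {α : Type*} [DecidableEq α] {d : ℕ} {c : Finset (Finset α)}

instance : Std.Symm (adjOn d c) where
  symm _ _ h := ⟨h.2.1, h.1, by rw [inter_comm]; exact h.2.2⟩

variable (d c) in
def component (F : Finset α) : Finset (Finset α) :=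
  c.filter fun G => Relation.ReflTransGen (adjOn d c) F G

theorem mem_component {F G : Finset α} :
    G ∈ component d c F ↔ G ∈ c ∧ Relation.ReflTransGen (adjOn d c) F G :=
  mem_filter

theorem self_mem_component {F : Finset α} (hF : F ∈ c) : F ∈ component d c F :=
  mem_component.2 ⟨hF, .refl⟩

theorem reflTransGen_component_of_reflTransGen {F G : Finset α}
    (h : Relation.ReflTransGen (adjOn d c) F G) :
    Relation.ReflTransGen (adjOn d (component d c F)) F G := by
  induction h with
  | refl => exact .refl
  | @tail A B hFA hAB ih =>
    exact ih.tail ⟨mem_component.2 ⟨hAB.1, hFA⟩, mem_component.2 ⟨hAB.2.1, hFA.tail hAB⟩, hAB.2.2⟩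

theorem reflTransGen_adjOn_component {F G₁ G₂ : Finset α}
    (h₁ : G₁ ∈ component d c F) (h₂ : G₂ ∈ component d c F) :
    Relation.ReflTransGen (adjOn d (component d c F)) G₁ G₂ :=
  (symm (reflTransGen_component_of_reflTransGen (mem_component.1 h₁).2)).trans
    (reflTransGen_component_of_reflTransGen (mem_component.1 h₂).2)

theorem card_inter_eq_of_ne {A B T : Finset α} (hA : A.card = d + 1) (hB : B.card = d + 1)
    (hT : T.card = d) (hTA : T ⊆ A) (hTB : T ⊆ B) (hAB : A ≠ B) : (A ∩ B).card = d := by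
  have hlt : (A ∩ B).card < A.card := by
    refine card_lt_card ⟨inter_subset_left, fun hA_sub => hAB ?_⟩
    exact eq_of_subset_of_card_le (hA_sub.trans inter_subset_right) (by rw [hA, hB])
  have hle : T.card ≤ (A ∩ B).card := card_le_card (subset_inter hTA hTB)
  omega

theorem filter_component_superset_eq (hc : ∀ G ∈ c, G.card = d + 1) {F A T : Finset α}
    (hT : T.card = d) (hA : A ∈ component d c F) (hTA : T ⊆ A) :
    (component d c F).filter (T ⊆ ·) = c.filter (T ⊆ ·) := by
  obtain ⟨hAc, hFA⟩ := mem_component.1 hA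
  refine Subset.antisymm (filter_subset_filter _ (filter_subset _ _)) fun B hB => ?_
  obtain ⟨hBc, hTB⟩ := mem_filter.1 hB
  refine mem_filter.2 ⟨mem_component.2 ⟨hBc, ?_⟩, hTB⟩
  obtain rfl | hAB := eq_or_ne A B
  · exact hFA
  · exact hFA.tail ⟨hAc, hBc, card_inter_eq_of_ne (hc A hAc) (hc B hBc) hT hTA hTB hAB⟩

theorem even_card_cofaces_of_bdry_eq_empty (hcyc : bdry c = ∅) (T : Finset α) :
    Even (c.filter fun F => T ⊆ F ∧ T.card + 1 = F.card).card := by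
  by_contra hodd
  obtain ⟨F, hF⟩ := card_pos.1 (Nat.not_even_iff_odd.1 hodd).pos
  obtain ⟨hFc, hTF, -⟩ := mem_filter.1 hF
  have hT : T ∈ bdry c :=
    mem_filter.2 ⟨mem_biUnion.2 ⟨F, hFc, mem_powerset.2 hTF⟩, Nat.not_even_iff_odd.1 hodd⟩
  simp [hcyc] at hT

theorem even_card_filter_component_superset (hc : ∀ G ∈ c, G.card = d + 1) (hcyc : bdry c = ∅)
    (F : Finset α) {T : Finset α} (hT : T.card = d) :
    Even ((component d c F).filter (T ⊆ ·)).card := by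
  by_cases hex : ∃ A ∈ component d c F, T ⊆ A
  · obtain ⟨A, hA, hTA⟩ := hex
    rw [filter_component_superset_eq hc hT hA hTA]
    have hcofaces := even_card_cofaces_of_bdry_eq_empty hcyc T
    rwa [filter_congr fun G hG => by rw [hT, hc G hG, and_iff_left rfl]] at hcofaces
  · push Not at hex
    rw [filter_false_of_mem hex, card_empty]
    exact Even.zero

theorem isCycleFaces_component (hc : ∀ G ∈ c, G.card = d + 1) (hcyc : bdry c = ∅)
    {F : Finset α} (hF : F ∈ c) : IsCycleFaces d (component d c F) :=
  ⟨⟨F, self_mem_component hF⟩, fun _ hG => hc _ (mem_component.1 hG).1,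
    fun _ h₁ _ h₂ => reflTransGen_adjOn_component h₁ h₂,
    fun _ hT => even_card_filter_component_superset hc hcyc F hT⟩

end Components

theorem stmt5_general (d : ℕ) (K c : Finset (Finset V))
    (hc : ∀ F ∈ c, F ∈ K ∧ F.card = d + 1) (hcyc : bdry c = ∅) :
    ∀ F ∈ c, IsCycleFaces d (c.filter fun G => Relation.ReflTransGen (adjOn d c) F G) :=
  fun _ hF => isCycleFaces_component (fun G hG => (hc G hG).2) hcyc hF

/-- Over Z/2, if c is a homological d-cycle in a simplicial complex K, then each
d-path-connected component of the support complex of c is a d-dimensional cycle. -/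
theorem stmt5 (d : ℕ) (hd : 1 ≤ d) (K c : Finset (Finset V)) (hK : IsComplex K)
    (hc : ∀ F ∈ c, F ∈ K ∧ F.card = d + 1) (hcyc : bdry c = ∅) :
    ∀ F ∈ c, IsCycleFaces d (c.filter fun G => Relation.ReflTransGen (adjOn d c) F G) :=
  stmt5_general d K c hc hcyc

end

end ConnonFaridi
end

section
/- Let Ω be a d-dimensional cycle with d-faces F_1, ..., F_k inside a simplicial complex Γ, and suppose A_1, ..., A_ℓ are (d+1)-faces of the induced subcomplex of Γ on V(Ω) such that, over Z/2Z, ∂_{d+1}(A_1 + ... + A_ℓ) = F_1 + ... + F_k, and no proper subset of {A_1,...,A_ℓ} satisfies this equation. Then for any vertex v not in V(Ω), the simplicial complex with facets F_1 ∪ {v}, ..., F_k ∪ {v}, A_1, ..., A_ℓ is a (d+1)-dimensional cycle. -/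
/-!
Write `U` for the cone over `Ω` with apex `v` together with `A`. A `(d+1)`-set `T ∋ v` lies in
as many faces of `U` as `T \ {v}` lies in faces of `Ω`, an even number; a `(d+1)`-set avoiding `v`
lies in `[T ∈ Ω] + #{B ∈ A | T ⊆ B}` faces, which is even because `∂A = Ω`.
The cone faces are connected because `Ω` is. The faces of `A` not reachable from the cone form
a chain with empty boundary: a face of odd degree in it lies either in `Ω`, hence in a cone face,
or, as `∂A = Ω`, also in a reachable face of `A`. Dropping them therefore keeps `∂A = Ω`, and by
minimality there are none.
-/

namespace ConnonFaridi

open Finset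
open scoped Classical

open Relation
open scoped symmDiff

section Boundary

variable {V : Type*} [DecidableEq V]

lemma subset_verts {K : Finset (Finset V)} {F : Finset V} (hF : F ∈ K) : F ⊆ verts K :=
  le_sup (f := id) hF

lemma mem_bdry_iff (c : Finset (Finset V)) (T : Finset V) :
    T ∈ bdry c ↔ Odd (c.filter fun F => T ⊆ F ∧ T.card + 1 = F.card).card := by
  refine ⟨fun h => (mem_filter.1 h).2, fun h => mem_filter.2 ⟨?_, h⟩⟩
  obtain ⟨F, hF⟩ := card_pos.1 h.pos
  rw [mem_filter] at hF
  exact mem_biUnion.2 ⟨F, hF.1, mem_powerset.2 hF.2.1⟩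

lemma exists_mem_of_mem_bdry {c : Finset (Finset V)} {T : Finset V} (h : T ∈ bdry c) :
    ∃ B ∈ c, T ⊆ B ∧ T.card + 1 = B.card := by
  obtain ⟨B, hB⟩ := card_pos.1 ((mem_bdry_iff c T).1 h).pos
  rw [mem_filter] at hB
  exact ⟨B, hB.1, hB.2⟩

lemma mem_bdry_iff_odd_card_filter {n : ℕ} {c : Finset (Finset V)}
    (hc : ∀ B ∈ c, B.card = n + 1) {T : Finset V} (hT : T.card = n) :
    T ∈ bdry c ↔ Odd (c.filter (T ⊆ ·)).card := by
  rw [mem_bdry_iff, filter_congr (q := (T ⊆ ·)) fun B hB => by simp [hT, hc B hB]]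

lemma bdry_union_of_disjoint {c c' : Finset (Finset V)} (h : Disjoint c c') :
    bdry (c ∪ c') = bdry c ∆ bdry c' := by
  ext T
  rw [mem_symmDiff, mem_bdry_iff, mem_bdry_iff, mem_bdry_iff, filter_union,
    card_union_of_disjoint (disjoint_filter_filter h), Nat.odd_add, ← Nat.not_odd_iff_even]
  tauto

theorem bdry_filter_eq_bdry (c : Finset (Finset V)) (P : Finset V → Prop)
    (hbdry : ∀ B ∈ c, ∀ T ∈ bdry c, T ⊆ B → T.card + 1 = B.card → P B)
    (hadj : ∀ B ∈ c, ∀ B' ∈ c, ∀ T : Finset V, T ⊆ B → T ⊆ B' →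
      T.card + 1 = B.card → T.card + 1 = B'.card → P B → P B') :
    bdry (c.filter P) = bdry c := by
  have hsplit : bdry c = bdry (c.filter P) ∆ bdry (c.filter fun B => ¬P B) := by
    rw [← bdry_union_of_disjoint (disjoint_filter_filter_not c c P), filter_union_filter_not_eq]
  suffices h : bdry (c.filter fun B => ¬P B) = ∅ by
    rw [hsplit, h, ← bot_eq_empty, symmDiff_bot]
  refine eq_empty_of_forall_notMem fun T hT => ?_
  obtain ⟨B, hB, hTB, hcard⟩ := exists_mem_of_mem_bdry hT
  rw [mem_filter] at hB
  apply hB.2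
  by_cases hTc : T ∈ bdry c
  · exact hbdry B hB.1 T hTc hTB hcard
  · have hT' : T ∈ bdry (c.filter P) := by
      rw [hsplit, mem_symmDiff] at hTc
      tauto
    obtain ⟨B', hB', hTB', hcard'⟩ := exists_mem_of_mem_bdry hT'
    rw [mem_filter] at hB'
    exact hadj B' hB'.1 B hB.1 T hTB' hTB hcard' hcard hB'.2

theorem forall_mem_of_bdry_minimal {c : Finset (Finset V)}
    (hmin : ∀ c' ⊂ c, bdry c' ≠ bdry c) (P : Finset V → Prop)
    (hbdry : ∀ B ∈ c, ∀ T ∈ bdry c, T ⊆ B → T.card + 1 = B.card → P B)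
    (hadj : ∀ B ∈ c, ∀ B' ∈ c, ∀ T : Finset V, T ⊆ B → T ⊆ B' →
      T.card + 1 = B.card → T.card + 1 = B'.card → P B → P B') :
    ∀ B ∈ c, P B := by
  by_contra! h
  exact hmin _ (filter_ssubset.2 h) (bdry_filter_eq_bdry c P hbdry hadj)

end Boundary

section Adjacency

variable {V : Type*} [DecidableEq V] {n : ℕ} {c : Finset (Finset V)}

instance : Std.Symm (adjOn n c) :=
  ⟨fun _ _ ⟨hX, hY, h⟩ => ⟨hY, hX, by rwa [inter_comm]⟩⟩

lemma adjOn_mono {c' : Finset (Finset V)} (h : c ⊆ c') {X Y : Finset V}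
    (hXY : adjOn n c X Y) : adjOn n c' X Y :=
  ⟨h hXY.1, h hXY.2.1, hXY.2.2⟩

lemma adjOn_of_subset_of_subset {X Y T : Finset V} (hX : X ∈ c) (hY : Y ∈ c) (hXY : X ≠ Y)
    (hXcard : X.card = n + 1) (hYcard : Y.card = n + 1) (hT : T.card = n)
    (hTX : T ⊆ X) (hTY : T ⊆ Y) : adjOn n c X Y := by
  refine ⟨hX, hY, le_antisymm ?_ (hT ▸ card_le_card (subset_inter hTX hTY))⟩
  by_contra! h
  have hYX : Y ⊆ X := by
    have hinter : X ∩ Y = Y := eq_of_subset_of_card_le inter_subset_right (by omega)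
    exact hinter ▸ inter_subset_left
  exact hXY (eq_of_subset_of_card_le hYX (by omega)).symm

end Adjacency

section Cone

variable {V : Type*} [DecidableEq V]

def cone (v : V) (Ω : Finset (Finset V)) : Finset (Finset V) :=
  Ω.image fun F => insert v F

variable {v : V} {Ω : Finset (Finset V)}

lemma insert_mem_cone {F : Finset V} (hF : F ∈ Ω) : insert v F ∈ cone v Ω :=
  mem_image_of_mem _ hF

lemma disjoint_cone {A : Finset (Finset V)} (hvA : ∀ B ∈ A, v ∉ B) : Disjoint (cone v Ω) A :=
  disjoint_left.2 fun X hX hXA => by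
    obtain ⟨F, -, rfl⟩ := mem_image.1 hX
    exact hvA _ hXA (mem_insert_self v F)

lemma card_filter_cone (hvΩ : ∀ F ∈ Ω, v ∉ F) (T : Finset V) :
    ((cone v Ω).filter (T ⊆ ·)).card = (Ω.filter fun F => T ⊆ insert v F).card := by
  rw [cone, filter_image, card_image_of_injOn]
  intro F hF G hG h
  simpa [erase_insert (hvΩ F (mem_filter.1 hF).1), erase_insert (hvΩ G (mem_filter.1 hG).1)]
    using congrArg (·.erase v) h

lemma adjOn_cone {d : ℕ} {F G : Finset V} (hvF : v ∉ F) (h : adjOn d Ω F G) :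
    adjOn (d + 1) (cone v Ω) (insert v F) (insert v G) := by
  obtain ⟨hF, hG, hFG⟩ := h
  refine ⟨insert_mem_cone hF, insert_mem_cone hG, ?_⟩
  rw [← insert_inter_distrib, card_insert_of_notMem fun h => hvF (mem_inter.1 h).1, hFG]

lemma reflTransGen_cone {d : ℕ} (hvΩ : ∀ F ∈ Ω, v ∉ F) {F G : Finset V}
    (h : ReflTransGen (adjOn d Ω) F G) :
    ReflTransGen (adjOn (d + 1) (cone v Ω)) (insert v F) (insert v G) :=
  ReflTransGen.lift _ (fun _ _ hab => adjOn_cone (hvΩ _ hab.1) hab) _ _ h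

end Cone

section ConeUnion

variable {V : Type*} [DecidableEq V] {d : ℕ} {v : V} {Ω A : Finset (Finset V)}

theorem even_card_filter_cone_union (hΩcard : ∀ F ∈ Ω, F.card = d + 1)
    (heven : ∀ T : Finset V, T.card = d → Even (Ω.filter (T ⊆ ·)).card)
    (hvΩ : ∀ F ∈ Ω, v ∉ F) (hAcard : ∀ B ∈ A, B.card = d + 2) (hvA : ∀ B ∈ A, v ∉ B)
    (hbd : bdry A = Ω) {T : Finset V} (hT : T.card = d + 1) :
    Even ((cone v Ω ∪ A).filter (T ⊆ ·)).card := by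
  rw [filter_union, card_union_of_disjoint (disjoint_filter_filter (disjoint_cone hvA)),
    card_filter_cone hvΩ]
  by_cases hvT : v ∈ T
  · have hA : A.filter (T ⊆ ·) = ∅ :=
      filter_false_of_mem fun B hB hTB => hvA B hB (hTB hvT)
    rw [hA, card_empty, add_zero, filter_congr fun F _ => subset_insert_iff]
    exact heven _ (by rw [card_erase_of_mem hvT, hT, Nat.add_sub_cancel])
  · have hcone : Ω.filter (fun F => T ⊆ insert v F) = Ω.filter (· = T) :=
      filter_congr fun F hF => by
        rw [subset_insert_iff_of_notMem hvT]
        exact ⟨fun h => (eq_of_subset_of_card_le h (by rw [hΩcard F hF, hT])).symm,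
          fun h => h.ge⟩
    have hodd := mem_bdry_iff_odd_card_filter hAcard hT
    rw [hbd] at hodd
    rw [hcone, filter_eq']
    split_ifs with hTΩ
    · exact odd_one.add_odd (hodd.1 hTΩ)
    · rw [card_empty, zero_add, ← Nat.not_odd_iff_even]
      exact mt hodd.2 hTΩ

theorem reflTransGen_cone_union (hΩcard : ∀ F ∈ Ω, F.card = d + 1)
    (hconn : ∀ F ∈ Ω, ∀ G ∈ Ω, ReflTransGen (adjOn d Ω) F G)
    (hvΩ : ∀ F ∈ Ω, v ∉ F) (hAcard : ∀ B ∈ A, B.card = d + 2) (hvA : ∀ B ∈ A, v ∉ B)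
    (hbd : bdry A = Ω) (hmin : ∀ A' ⊂ A, bdry A' ≠ Ω) {F₀ : Finset V} (hF₀ : F₀ ∈ Ω) :
    ∀ X ∈ cone v Ω ∪ A, ReflTransGen (adjOn (d + 1) (cone v Ω ∪ A)) (insert v F₀) X := by
  have hcone : ∀ F ∈ Ω, ReflTransGen (adjOn (d + 1) (cone v Ω ∪ A)) (insert v F₀) (insert v F) :=
    fun F hF => ReflTransGen.mono (fun _ _ => adjOn_mono subset_union_left) _ _
      (reflTransGen_cone hvΩ (hconn F₀ hF₀ F hF))
  have hA : ∀ B ∈ A, ReflTransGen (adjOn (d + 1) (cone v Ω ∪ A)) (insert v F₀) B := by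
    refine forall_mem_of_bdry_minimal (hbd ▸ hmin) _ ?_ ?_
    · intro B hB T hT hTB _
      rw [hbd] at hT
      refine (hcone T hT).tail (adjOn_of_subset_of_subset (mem_union_left _ (insert_mem_cone hT))
        (mem_union_right _ hB) (fun h => hvA B hB (h ▸ mem_insert_self v T))
        (by rw [card_insert_of_notMem (hvΩ T hT), hΩcard T hT]) (hAcard B hB) (hΩcard T hT)
        (subset_insert v T) hTB)
    · intro B hB B' hB' T hTB hTB' hcard _ hPB
      rcases eq_or_ne B B' with rfl | hne
      · exact hPB
      · exact hPB.tail (adjOn_of_subset_of_subset (mem_union_right _ hB) (mem_union_right _ hB')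
          hne (hAcard B hB) (hAcard B' hB') (by have := hAcard B hB; omega) hTB hTB')
  intro X hX
  rcases mem_union.1 hX with hX | hX
  · obtain ⟨F, hF, rfl⟩ := mem_image.1 hX
    exact hcone F hF
  · exact hA X hX

end ConeUnion

variable {V : Type*} [Fintype V] [DecidableEq V]

theorem stmt6_general (d : ℕ) (Γ Ω A : Finset (Finset V))
    (hΩ : IsCycleFaces d Ω)
    (hA : ∀ B ∈ A, B ∈ induced Γ (verts Ω) ∧ B.card = d + 2)
    (hbd : bdry A = Ω) (hmin : ∀ A' ⊂ A, bdry A' ≠ Ω)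
    (v : V) (hv : v ∉ verts Ω) :
    IsCycleFaces (d + 1) ((Ω.image fun F => insert v F) ∪ A) := by
  obtain ⟨⟨F₀, hF₀⟩, hcard, hconn, heven⟩ := hΩ
  have hvΩ : ∀ F ∈ Ω, v ∉ F := fun F hF hvF => hv (subset_verts hF hvF)
  have hvA : ∀ B ∈ A, v ∉ B := fun B hB hvB => hv ((mem_filter.1 (hA B hB).1).2 hvB)
  have hAcard : ∀ B ∈ A, B.card = d + 2 := fun B hB => (hA B hB).2
  have hreach := reflTransGen_cone_union hcard hconn hvΩ hAcard hvA hbd hmin hF₀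
  refine ⟨⟨_, mem_union_left _ (insert_mem_cone hF₀)⟩, ?_, fun X hX Y hY => ?_,
    fun T hT => even_card_filter_cone_union hcard heven hvΩ hAcard hvA hbd hT⟩
  · intro X hX
    rcases mem_union.1 hX with hX | hX
    · obtain ⟨F, hF, rfl⟩ := mem_image.1 hX
      rw [card_insert_of_notMem (hvΩ F hF), hcard F hF]
    · exact hAcard X hX
  · exact (symm (hreach X hX)).trans (hreach Y hY)

/-- If Ω is a d-dimensional cycle in Γ and A₁,...,A_ℓ are (d+1)-faces of the
induced subcomplex of Γ on V(Ω) with ∂(A₁+...+A_ℓ) equal to the sum of the d-faces of Ω over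
Z/2, minimally so, then for v ∉ V(Ω) the complex with facets F₁ ∪ {v},...,F_k ∪ {v},
A₁,...,A_ℓ is a (d+1)-dimensional cycle. -/
theorem stmt6 (d : ℕ) (hd : 1 ≤ d) (Γ Ω A : Finset (Finset V)) (hΓ : IsComplex Γ)
    (hΩΓ : Ω ⊆ Γ) (hΩ : IsCycleFaces d Ω)
    (hA : ∀ B ∈ A, B ∈ induced Γ (verts Ω) ∧ B.card = d + 2)
    (hbd : bdry A = Ω) (hmin : ∀ A' ⊂ A, bdry A' ≠ Ω)
    (v : V) (hv : v ∉ verts Ω) :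
    IsCycleFaces (d + 1) ((Ω.image fun F => insert v F) ∪ A) :=
  stmt6_general d Γ Ω A hΩ hA hbd hmin v hv

end ConnonFaridi
end

section
/- Let Ω be a face-minimal d-dimensional cycle with vertex set V, not d-complete, contained in a simplicial complex Γ. If over Z/2Z the sum of the d-faces of Ω is a d-boundary of a (d+1)-chain of faces of the induced subcomplex Γ_V, then Ω has a chord set in Γ. -/
/-! Write Ω = ∂c' with c' a set of (d+1)-faces B ⊆ V(Ω). The boundary of each simplex B is a
d-cycle on d + 2 vertices, and a d-face lies in an odd number of these boundaries exactly when it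
lies in ∂c' = Ω; so the boundaries ∂B, with the d-faces of the ∂B outside Ω as chords, form a
chord set. If c' had at most one element, Ω would be empty or the boundary of a simplex, hence
d-complete; two distinct B ⊆ V(Ω) force |V(Ω)| > d + 2, so each ∂B has fewer vertices than Ω. -/

namespace ConnonFaridi

open Finset
open scoped Classical

noncomputable section

variable {V : Type*} [Fintype V] [DecidableEq V]

theorem card_lt_of_ne_of_subset {α : Type*} {A B W : Finset α} (hAB : A ≠ B) (hcard : #A = #B)
    (hA : A ⊆ W) (hB : B ⊆ W) : #A < #W := by
  refine card_lt_card (ssubset_of_subset_of_ne hA ?_)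
  rintro rfl
  exact hAB (eq_of_subset_of_card_le hB hcard.le).symm

theorem countP_mem_map_toList {ι β : Type*} [DecidableEq β] (s : Finset ι) (f : ι → Finset β)
    (x : β) :
    (s.toList.map f).countP (fun t => decide (x ∈ t)) = #{a ∈ s | x ∈ f a} := by
  rw [List.countP_map, Function.comp_def, ← Multiset.coe_countP, coe_toList,
    Multiset.countP_eq_card_filter]
  rfl

section

variable {α : Type*} [DecidableEq α]

theorem card_inter_of_mem_powersetCard {n : ℕ} {B F G : Finset α}
    (hB : #B = n + 2) (hF : F ∈ B.powersetCard (n + 1)) (hG : G ∈ B.powersetCard (n + 1))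
    (hFG : F ≠ G) : #(F ∩ G) = n := by
  rw [mem_powersetCard] at hF hG
  have hunion : #(F ∪ G) ≤ n + 2 := hB ▸ card_le_card (union_subset hF.1 hG.1)
  have hinter : #(F ∩ G) < n + 1 := by
    refine hF.2 ▸ card_lt_card (ssubset_of_subset_of_ne inter_subset_left fun h => hFG ?_)
    exact eq_of_subset_of_card_le (h ▸ inter_subset_right) (by omega)
  have := card_union_add_card_inter F G
  omega

theorem verts_powersetCard {n : ℕ} {B : Finset α} (hB : n < #B) :
    verts (B.powersetCard (n + 1)) = B :=
  powersetCard_sup B n hB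

theorem completeOn_powersetCard {d : ℕ} {B : Finset α} (hB : d < #B) :
    CompleteOn d (B.powersetCard (d + 1)) := by
  intro S hS hSc
  rw [verts_powersetCard hB] at hS
  exact ⟨S, mem_powersetCard.mpr ⟨hS, hSc⟩, subset_rfl⟩

theorem isCycleFaces_powersetCard {d : ℕ} {B : Finset α} (hB : #B = d + 2) :
    IsCycleFaces d (B.powersetCard (d + 1)) := by
  refine ⟨powersetCard_nonempty.mpr (by omega), fun F hF => (mem_powersetCard.mp hF).2,
    fun F hF G hG => ?_, fun T hT => ?_⟩
  · rcases eq_or_ne F G with rfl | hFG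
    · exact Relation.ReflTransGen.refl
    · exact .single ⟨hF, hG, card_inter_of_mem_powersetCard hB hF hG hFG⟩
  · by_cases hTB : T ⊆ B
    · rw [card_filter_powersetCard_subset T B (d + 1) hTB (by omega), hB, hT]
      simp [show d + 2 - d = 2 by omega, show d + 1 - d = 1 by omega]
    · rw [filter_eq_empty_iff.mpr fun F hF hTF => hTB (hTF.trans (mem_powersetCard.mp hF).1)]
      simp

variable {d : ℕ} {c : Finset (Finset α)}

theorem mem_bdry_iff_s14 (hc : ∀ B ∈ c, #B = d + 2) {F : Finset α} :
    F ∈ bdry c ↔ #F = d + 1 ∧ Odd #{B ∈ c | F ⊆ B} := by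
  have hfilter (hF : #F = d + 1) : {B ∈ c | F ⊆ B ∧ #F + 1 = #B} = {B ∈ c | F ⊆ B} :=
    filter_congr fun B hB => by simp [hF, hc B hB]
  simp only [bdry, mem_filter, mem_biUnion, mem_powerset]
  constructor
  · rintro ⟨-, hodd⟩
    obtain ⟨B, hB⟩ := card_pos.mp hodd.pos
    obtain ⟨hBc, -, hcard⟩ := mem_filter.mp hB
    have hF : #F = d + 1 := by have := hc B hBc; omega
    exact ⟨hF, hfilter hF ▸ hodd⟩
  · rintro ⟨hF, hodd⟩
    obtain ⟨B, hB⟩ := card_pos.mp hodd.pos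
    exact ⟨⟨B, mem_filter.mp hB⟩, (hfilter hF).symm ▸ hodd⟩

theorem bdry_subset_biUnion_powersetCard (hc : ∀ B ∈ c, #B = d + 2) :
    bdry c ⊆ c.biUnion (powersetCard (d + 1)) := by
  intro F hF
  obtain ⟨hFc, hodd⟩ := (mem_bdry_iff_s14 hc).mp hF
  obtain ⟨B, hB⟩ := card_pos.mp hodd.pos
  rw [mem_filter] at hB
  exact mem_biUnion.mpr ⟨B, hB.1, mem_powersetCard.mpr ⟨hB.2, hFc⟩⟩

theorem bdry_singleton {B : Finset α} (hB : #B = d + 2) : bdry {B} = B.powersetCard (d + 1) := by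
  ext F
  rw [mem_bdry_iff_s14 (by simpa using hB), mem_powersetCard, filter_singleton]
  by_cases hFB : F ⊆ B <;> simp [hFB, and_comm]

theorem completeOn_bdry_of_card_le_one (hc : ∀ B ∈ c, #B = d + 2) (hc1 : #c ≤ 1) :
    CompleteOn d (bdry c) := by
  obtain ⟨B, hB⟩ := card_le_one_iff_subset_singleton.mp hc1
  rcases subset_singleton_iff.mp hB with rfl | rfl
  · intro S hS hSc
    simp_all [bdry, verts]
  · have hB2 := hc B (mem_singleton_self B)
    rw [bdry_singleton hB2]
    exact completeOn_powersetCard (by omega)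

theorem isChordSet_of_bdry_eq {Γ Ω : Finset (Finset α)} (hΓ : IsComplex Γ)
    (hcΓ : ∀ B ∈ c, B ∈ Γ ∧ #B = d + 2) (hbd : bdry c = Ω) (hc2 : 1 < #c)
    (hΩ : d + 2 < #(verts Ω)) :
    IsChordSet d Γ Ω (c.biUnion (powersetCard (d + 1)) \ Ω) := by
  have hc (B) (hB : B ∈ c) : #B = d + 2 := (hcΓ B hB).2
  have hunion : c.biUnion (powersetCard (d + 1)) \ Ω ∪ Ω = c.biUnion (powersetCard (d + 1)) :=
    sdiff_union_of_subset (hbd ▸ bdry_subset_biUnion_powersetCard hc)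
  have hodd {F : Finset α} (hF : #F = d + 1) :
      Odd ((c.toList.map (powersetCard (d + 1))).countP fun Ωi => decide (F ∈ Ωi)) ↔ F ∈ Ω := by
    simp only [countP_mem_map_toList, ← hbd, mem_bdry_iff_s14 hc, mem_powersetCard, hF, and_true,
      true_and]
  refine ⟨fun F hF => ?_, c.toList.map (powersetCard (d + 1)),
    by simpa [Nat.succ_le_iff] using hc2, fun Ωi hΩi => ?_, fun F hF => ?_, fun F hF => ?_,
    fun F hF => ?_⟩
  · obtain ⟨hF, hFΩ⟩ := mem_sdiff.mp hF
    obtain ⟨B, hB, hFB⟩ := mem_biUnion.mp hF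
    obtain ⟨hFB, hFcard⟩ := mem_powersetCard.mp hFB
    exact ⟨hΓ B (hcΓ B hB).1 F hFB, hFcard, hFΩ⟩
  · obtain ⟨B, hB, rfl⟩ := List.mem_map.mp hΩi
    have hB2 := hc B (mem_toList.mp hB)
    refine ⟨isCycleFaces_powersetCard hB2, fun F hF => ?_, ?_⟩
    · rw [hunion]
      exact mem_biUnion.mpr ⟨B, mem_toList.mp hB, hF⟩
    · rwa [verts_powersetCard (by omega), hB2]
  · obtain ⟨B, hB, hFB⟩ := mem_biUnion.mp (hunion ▸ hF)
    exact ⟨_, List.mem_map_of_mem (mem_toList.mpr hB), hFB⟩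
  · obtain ⟨hF, hFΩ⟩ := mem_sdiff.mp hF
    obtain ⟨B, -, hFB⟩ := mem_biUnion.mp hF
    exact Nat.not_odd_iff_even.mp fun h => hFΩ ((hodd (mem_powersetCard.mp hFB).2).mp h)
  · exact (hodd ((mem_bdry_iff_s14 hc).mp (hbd ▸ hF)).1).mpr hF

end

theorem stmt14_general (d : ℕ) (Γ Ω : Finset (Finset V)) (hΓ : IsComplex Γ)
    (hnc : ¬ CompleteOn d Ω)
    (c' : Finset (Finset V)) (hc' : ∀ B ∈ c', B ∈ induced Γ (verts Ω) ∧ B.card = d + 2)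
    (hbd : bdry c' = Ω) :
    ∃ C, IsChordSet d Γ Ω C := by
  simp only [induced, mem_filter] at hc'
  have hcΓ (B) (hB : B ∈ c') : B ∈ Γ ∧ #B = d + 2 := ⟨(hc' B hB).1.1, (hc' B hB).2⟩
  have hc2 : 1 < #c' := not_le.mp fun h =>
    hnc (hbd ▸ completeOn_bdry_of_card_le_one (fun B hB => (hc' B hB).2) h)
  obtain ⟨B₁, hB₁, B₂, hB₂, hne⟩ := one_lt_card.mp hc2
  obtain ⟨⟨-, hB₁V⟩, hB₁d⟩ := hc' B₁ hB₁
  obtain ⟨⟨-, hB₂V⟩, hB₂d⟩ := hc' B₂ hB₂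
  have hV : d + 2 < #(verts Ω) :=
    hB₁d ▸ card_lt_of_ne_of_subset hne (hB₁d.trans hB₂d.symm) hB₁V hB₂V
  exact ⟨_, isChordSet_of_bdry_eq hΓ hcΓ hbd hc2 hV⟩

/-- If a face-minimal, non-d-complete d-dimensional cycle Ω in Γ is, over Z/2,
the boundary of a (d+1)-chain of faces of the induced subcomplex Γ_{V(Ω)}, then Ω has a chord
set in Γ. -/
theorem stmt14 (d : ℕ) (hd : 1 ≤ d) (Γ Ω : Finset (Finset V)) (hΓ : IsComplex Γ)
    (hΩΓ : Ω ⊆ Γ) (hΩ : IsCycleFaces d Ω) (hmin : FaceMinimal d Ω) (hnc : ¬ CompleteOn d Ω)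
    (c' : Finset (Finset V)) (hc' : ∀ B ∈ c', B ∈ induced Γ (verts Ω) ∧ B.card = d + 2)
    (hbd : bdry c' = Ω) :
    ∃ C, IsChordSet d Γ Ω C :=
  stmt14_general d Γ Ω hΓ hnc c' hc' hbd

end

end ConnonFaridi
end
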